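/- Let α₀ = (688 − 480√2)/49. The two tuples t₁ = (√α₀, √α₀, √(1+α₀) − √α₀, √α₀, √α₀, √(1+α₀) − √α₀) and t₂ = (1, 1, √(α₀/2), √(2α₀), 0, 0) are both general configurations for α₀, they are distinct, their double bubble perimeters are equal (namely 4√(1+α₀) + 2√α₀ = 4 + 2√(2α₀)), and both attain the infimum of the double bubble perimeter over all general configurations for α₀. -/
import Mathlib

set_option maxHeartbeats 4000000

/-- A general configuration for `α` (Figure 3 of the paper). -/
def IsGeneralConfig (α a b c d e f : ℝ) : Prop :=
  0 < a ∧ 0 < b ∧ 0 ≤ c ∧ 0 ≤ d ∧ 0 ≤ e ∧ 0 ≤ f ∧ d ≤ b ∧ e ≤ a ∧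
    ((a * b = 1 ∧ c * d + c * f + e * f = α) ∨
      (a * b = α ∧ c * d + c * f + e * f = 1))

private lemma db_caseI (w a b c d e f : ℝ) (hw2 : w^2 = 2) (hwl : (1.414:ℝ) ≤ w)
    (ha : 0 < a) (hb : 0 < b) (hc : 0 ≤ c) (hd : 0 ≤ d) (he : 0 ≤ e) (hf : 0 ≤ f)
    (h1 : a * b = 1) (h2 : c * d + c * f + e * f = (688 - 480 * w) / 49) :
    (40 * w - 20) / 7 ≤ 2 * (a + b + c + f) + (d + e) := by
  have hab : 2 ≤ a + b := by nlinarith [sq_nonneg (a - b)]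
  have hq0 : (0:ℝ) ≤ (40 * w - 48) / 7 := by linarith
  have hX0 : (0:ℝ) ≤ 2 * (c + f) + (d + e) := by linarith
  have hX2 : ((40 * w - 48) / 7)^2 ≤ (2 * (c + f) + (d + e))^2 := by
    nlinarith [sq_nonneg (2*c - d), sq_nonneg (2*f - e), mul_nonneg hc he,
      mul_nonneg hd hf, mul_nonneg hd he, hw2]
  have hX : (40 * w - 48) / 7 ≤ 2 * (c + f) + (d + e) := by nlinarith [hX2, hX0, hq0]
  linarith

private lemma db_Zb (w b f : ℝ) (hw2 : w^2 = 2) (hb : 0 < b) (hf : 0 ≤ f) (hfb : f ≤ b) :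
    0 ≤ (2*((688-480*w)/49) + 3*b^2 + 2*f*b - ((40*w-20)/7)*b)*(b+f) + 2*b := by
  nlinarith [mul_nonneg hb.le (sq_nonneg (b+f-1)),
    mul_nonneg hb.le (sq_nonneg (b - (20*w-24)/7)), hw2, sq_nonneg (b-f)]

private lemma db_W3b (w b f : ℝ) (hw2 : w^2 = 2) (hb : 0 < b) (hbf : b ≤ f) :
    0 ≤ (b+f)*(2*((688-480*w)/49)*f + 2*b^2*f + 3*b*f^2 + b - ((40*w-20)/7)*b*f)
        + (f-b)*(b - ((688-480*w)/49)*f - b^2*f - b*f^2) := by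
  nlinarith [mul_nonneg hb.le (sq_nonneg (b+f-(16*w-15)/7)),
    mul_nonneg (le_trans hb.le hbf) (sq_nonneg (b+f-(16*w-15)/7)),
    mul_nonneg hb.le (sq_nonneg (b - (20-12*w)/7)), hw2, sq_nonneg (b-f)]

private lemma db_caseII_sym (w a b c d e f : ℝ) (hw2 : w^2 = 2) (hwl : (1.414:ℝ) ≤ w)
    (hwu : w ≤ 1.41422)
    (ha : 0 < a) (hb : 0 < b) (hc : 0 ≤ c) (hd : 0 ≤ d) (he : 0 ≤ e) (hf : 0 ≤ f)
    (hdb : d ≤ b) (hea : e ≤ a) (hcf : f ≤ c)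
    (h1 : a * b = (688 - 480 * w) / 49) (h2 : c * d + c * f + e * f = 1) :
    (40 * w - 20) / 7 ≤ 2 * (a + b + c + f) + (d + e) := by
  have hc0 : 0 < c := by
    rcases hc.eq_or_lt with h | h
    · exfalso
      have hcz : c = 0 := h.symm
      have hfz : f = 0 := le_antisymm (hcz ▸ hcf) hf
      rw [hcz, hfz] at h2; norm_num at h2
    · exact h
  have hK : 1 ≤ c * b + c * f + a * f := by
    nlinarith [mul_nonneg hc (sub_nonneg.2 hdb), mul_nonneg hf (sub_nonneg.2 hea)]
  rcases le_total (c * (b + f)) 1 with hII | hI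
  · -- c(b+f) ≤ 1
    rcases hf.eq_or_lt with hf0 | hf0
    · -- f = 0
      have hfz : f = 0 := hf0.symm
      subst hfz
      have hcb : c * b = 1 := by nlinarith
      have hcd : c * d = 1 := by linarith [h2]
      have hdd : d = b := by
        have : c * d = c * b := by rw [hcd, hcb]
        exact mul_left_cancel₀ (ne_of_gt hc0) this
      nlinarith [sq_nonneg (6*b - (40*w-20)/7), mul_pos ha hb, mul_pos hb hc0, he, hb, hdd]
    · -- f > 0
      have hde2 : 1 - c*f - (c-f)*b ≤ f*(d+e) := by
        nlinarith [mul_nonneg (sub_nonneg.2 hcf) (sub_nonneg.2 hdb)]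
      have hbf0 : (0:ℝ) < b + f := by linarith
      rcases le_total f b with hfb | hbf
      · -- f ≤ b : Z route
        have hZb := db_Zb w b f hw2 hb hf hfb
        have hZ : 0 ≤ (2*a + 3*b + 2*f - (40*w-20)/7)*(b+f) + 2 := by
          nlinarith [hZb, hb, h1]
        have key : f*((40*w-20)/7) ≤ f*(2*(a+b+c+f)+(d+e)) := by
          nlinarith [mul_le_mul_of_nonneg_left hde2 hbf0.le,
            mul_nonneg hf0.le hZ,
            mul_nonneg (sub_nonneg.2 hfb) (sub_nonneg.2 hII)]
        exact le_of_mul_le_mul_left key hf0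
      · -- b ≤ f : W3 route
        have hW3b := db_W3b w b f hw2 hb hbf
        have hid : b*((b+f)*(2*a*f+2*b*f+3*f^2+1-((40*w-20)/7)*f) + (f-b)*(1-(a*f+b*f+f^2)))
            = (b+f)*(2*((688-480*w)/49)*f + 2*b^2*f + 3*b*f^2 + b - ((40*w-20)/7)*b*f)
              + (f-b)*(b - ((688-480*w)/49)*f - b^2*f - b*f^2) := by
          linear_combination (2*f*(b+f) - f*(f-b)) * h1
        have hW3 : 0 ≤ (b+f)*(2*a*f+2*b*f+3*f^2+1-((40*w-20)/7)*f) + (f-b)*(1-(a*f+b*f+f^2)) := by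
          nlinarith [hW3b, hid, hb]
        have h6 : 1 - (a*f+b*f+f^2) ≤ (c-f)*(b+f) := by nlinarith [hK]
        have key : f*((40*w-20)/7) ≤ f*(2*(a+b+c+f)+(d+e)) := by
          nlinarith [mul_le_mul_of_nonneg_left hde2 hbf0.le, hW3,
            mul_nonneg (sub_nonneg.2 hbf) (sub_nonneg.2 h6)]
        exact le_of_mul_le_mul_left key hf0
  · -- 1 ≤ c(b+f)
    have hq0 : (0:ℝ) ≤ (40 * w - 48) / 7 := by linarith
    have e2 : ((40 * w - 48) / 7)^2 ≤ (2*a + b)^2 := by nlinarith [sq_nonneg (2*a - b), hw2]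
    have e1 : (40 * w - 48) / 7 ≤ 2*a + b := by nlinarith [e2, ha, hb, hq0]
    have hde : 1 - c*f ≤ c*(d+e) := by nlinarith [mul_nonneg he (sub_nonneg.2 hcf)]
    have key : c*((40*w-20)/7) ≤ c*(2*(a+b+c+f)+(d+e)) := by
      nlinarith [hde, hI, mul_le_mul_of_nonneg_right e1 hc, sq_nonneg (c-1)]
    exact le_of_mul_le_mul_left key hc0

private lemma db_caseII (w a b c d e f : ℝ) (hw2 : w^2 = 2) (hwl : (1.414:ℝ) ≤ w)
    (hwu : w ≤ 1.41422)
    (ha : 0 < a) (hb : 0 < b) (hc : 0 ≤ c) (hd : 0 ≤ d) (he : 0 ≤ e) (hf : 0 ≤ f)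
    (hdb : d ≤ b) (hea : e ≤ a)
    (h1 : a * b = (688 - 480 * w) / 49) (h2 : c * d + c * f + e * f = 1) :
    (40 * w - 20) / 7 ≤ 2 * (a + b + c + f) + (d + e) := by
  rcases le_total f c with hcf | hcf
  · exact db_caseII_sym w a b c d e f hw2 hwl hwu ha hb hc hd he hf hdb hea hcf h1 h2
  · have := db_caseII_sym w b a f e d c hw2 hwl hwu hb ha hf he hd hc hea hdb hcf
      (by linarith [h1, mul_comm a b] : b * a = (688 - 480 * w) / 49)
      (by linarith [h2, mul_comm c d, mul_comm c f, mul_comm e f] : f * e + f * c + d * c = 1)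
    linarith [this]

/-- **Non-uniqueness at the critical ratio (Theorem 1.1, part III).** At
`α₀ = (688 − 480√2)/49` both the corner-square configuration and the kissing-rectangles
configuration are general configurations, they are distinct, their double bubble
perimeters coincide (`4√(1+α₀) + 2√α₀ = 4 + 2√(2α₀)`), and both attain the infimum of
the double bubble perimeter over all general configurations for `α₀`. -/
theorem non_uniqueness_at_critical_ratio :
    let α₀ : ℝ := (688 - 480 * Real.sqrt 2) / 49
    let t₁ : ℝ × ℝ × ℝ × ℝ × ℝ × ℝ :=
      (Real.sqrt α₀, Real.sqrt α₀, Real.sqrt (1 + α₀) - Real.sqrt α₀,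
        Real.sqrt α₀, Real.sqrt α₀, Real.sqrt (1 + α₀) - Real.sqrt α₀)
    let t₂ : ℝ × ℝ × ℝ × ℝ × ℝ × ℝ :=
      (1, 1, Real.sqrt (α₀ / 2), Real.sqrt (2 * α₀), 0, 0)
    let per : ℝ × ℝ × ℝ × ℝ × ℝ × ℝ → ℝ := fun t =>
      2 * (t.1 + t.2.1 + t.2.2.1 + t.2.2.2.2.2) + (t.2.2.2.1 + t.2.2.2.2.1)
    IsGeneralConfig α₀ t₁.1 t₁.2.1 t₁.2.2.1 t₁.2.2.2.1 t₁.2.2.2.2.1 t₁.2.2.2.2.2 ∧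
    IsGeneralConfig α₀ t₂.1 t₂.2.1 t₂.2.2.1 t₂.2.2.2.1 t₂.2.2.2.2.1 t₂.2.2.2.2.2 ∧
    t₁ ≠ t₂ ∧
    per t₁ = 4 * Real.sqrt (1 + α₀) + 2 * Real.sqrt α₀ ∧
    per t₂ = 4 + 2 * Real.sqrt (2 * α₀) ∧
    4 * Real.sqrt (1 + α₀) + 2 * Real.sqrt α₀ = 4 + 2 * Real.sqrt (2 * α₀) ∧
    sInf {p : ℝ | ∃ a b c d e f : ℝ, IsGeneralConfig α₀ a b c d e f ∧
        p = 2 * (a + b + c + f) + (d + e)} = per t₁ ∧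
    sInf {p : ℝ | ∃ a b c d e f : ℝ, IsGeneralConfig α₀ a b c d e f ∧
        p = 2 * (a + b + c + f) + (d + e)} = per t₂ := by
  intro α₀ t₁ t₂ per
  set w : ℝ := Real.sqrt 2 with hw
  have hw2 : w^2 = 2 := Real.sq_sqrt (by norm_num)
  have hw0 : (0:ℝ) ≤ w := Real.sqrt_nonneg 2
  have hwl : (1.414:ℝ) ≤ w := by nlinarith [hw2, hw0]
  have hwu : w ≤ 1.41422 := by nlinarith [hw2, hw0]
  have hα : α₀ = (688 - 480 * w) / 49 := rfl
  have h1α : (0:ℝ) ≤ (20 - 12*w)/7 := by linarith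
  have hsa : Real.sqrt α₀ = (20 - 12*w)/7 := by
    rw [hα, show (688 - 480*w)/49 = ((20 - 12*w)/7)^2 by linear_combination (-(144:ℝ)/49) * hw2]
    exact Real.sqrt_sq h1α
  have hss : Real.sqrt (1 + α₀) = (16*w - 15)/7 := by
    rw [hα, show 1 + (688 - 480*w)/49 = ((16*w - 15)/7)^2 by linear_combination (-(256:ℝ)/49) * hw2]
    exact Real.sqrt_sq (by linarith)
  have hs2a : Real.sqrt (2 * α₀) = (20*w - 24)/7 := by
    rw [hα, show 2 * ((688 - 480*w)/49) = ((20*w - 24)/7)^2 by linear_combination (-(400:ℝ)/49) * hw2]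
    exact Real.sqrt_sq (by linarith)
  have hsh : Real.sqrt (α₀ / 2) = (10*w - 12)/7 := by
    rw [hα, show (688 - 480*w)/49 / 2 = ((10*w - 12)/7)^2 by linear_combination (-(100:ℝ)/49) * hw2]
    exact Real.sqrt_sq (by linarith)
  have config₁ : IsGeneralConfig α₀ t₁.1 t₁.2.1 t₁.2.2.1 t₁.2.2.2.1 t₁.2.2.2.2.1 t₁.2.2.2.2.2 := by
    show IsGeneralConfig α₀ (Real.sqrt α₀) (Real.sqrt α₀) (Real.sqrt (1 + α₀) - Real.sqrt α₀)
      (Real.sqrt α₀) (Real.sqrt α₀) (Real.sqrt (1 + α₀) - Real.sqrt α₀)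
    rw [hsa, hss]
    refine ⟨by linarith, by linarith, by linarith, by linarith, by linarith, by linarith,
      le_refl _, le_refl _, Or.inr ⟨?_, ?_⟩⟩
    · rw [hα]; linear_combination ((144:ℝ)/49) * hw2
    · linear_combination ((16:ℝ)/7) * hw2
  have config₂ : IsGeneralConfig α₀ t₂.1 t₂.2.1 t₂.2.2.1 t₂.2.2.2.1 t₂.2.2.2.2.1 t₂.2.2.2.2.2 := by
    show IsGeneralConfig α₀ 1 1 (Real.sqrt (α₀ / 2)) (Real.sqrt (2 * α₀)) 0 0
    rw [hsh, hs2a]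
    refine ⟨by norm_num, by norm_num, by linarith, by linarith, le_refl _, le_refl _,
      by linarith, by linarith, Or.inl ⟨by norm_num, ?_⟩⟩
    · rw [hα]; linear_combination ((200:ℝ)/49) * hw2
  have hne : t₁ ≠ t₂ := by
    intro h
    have h1' : Real.sqrt α₀ = 1 := congrArg Prod.fst h
    rw [hsa] at h1'
    linarith
  have hP1 : per t₁ = 4 * Real.sqrt (1 + α₀) + 2 * Real.sqrt α₀ := by
    show 2 * (Real.sqrt α₀ + Real.sqrt α₀ + (Real.sqrt (1 + α₀) - Real.sqrt α₀)
        + (Real.sqrt (1 + α₀) - Real.sqrt α₀)) + (Real.sqrt α₀ + Real.sqrt α₀) = _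
    ring
  have hP2 : per t₂ = 4 + 2 * Real.sqrt (2 * α₀) := by
    show 2 * (1 + 1 + Real.sqrt (α₀ / 2) + 0) + (Real.sqrt (2 * α₀) + 0) = _
    rw [hsh, hs2a]; ring
  have hbridge : 4 * Real.sqrt (1 + α₀) + 2 * Real.sqrt α₀ = 4 + 2 * Real.sqrt (2 * α₀) := by
    rw [hss, hsa, hs2a]; ring
  have hP1w : per t₁ = (40*w - 20)/7 := by rw [hP1, hss, hsa]; ring
  -- lower bound over the whole set
  have hlow : ∀ p ∈ {p : ℝ | ∃ a b c d e f : ℝ, IsGeneralConfig α₀ a b c d e f ∧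
      p = 2 * (a + b + c + f) + (d + e)}, (40*w - 20)/7 ≤ p := by
    rintro p ⟨a, b, c, d, e, f, ⟨ha, hb, hc, hd, he, hf, hdb, hea, hcase⟩, rfl⟩
    rcases hcase with ⟨h1, h2⟩ | ⟨h1, h2⟩
    · exact db_caseI w a b c d e f hw2 hwl ha hb hc hd he hf h1 (by rw [← hα]; exact h2)
    · exact db_caseII w a b c d e f hw2 hwl hwu ha hb hc hd he hf hdb hea
        (by rw [← hα]; exact h1) h2
  have hmem : per t₁ ∈ {p : ℝ | ∃ a b c d e f : ℝ, IsGeneralConfig α₀ a b c d e f ∧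
      p = 2 * (a + b + c + f) + (d + e)} := by
    refine ⟨Real.sqrt α₀, Real.sqrt α₀, Real.sqrt (1 + α₀) - Real.sqrt α₀,
      Real.sqrt α₀, Real.sqrt α₀, Real.sqrt (1 + α₀) - Real.sqrt α₀, config₁, rfl⟩
  have hlow2 : ∀ p ∈ {p : ℝ | ∃ a b c d e f : ℝ, IsGeneralConfig α₀ a b c d e f ∧
      p = 2 * (a + b + c + f) + (d + e)}, per t₁ ≤ p := by
    intro p hp; rw [hP1w]; exact hlow p hp
  have h7 : sInf {p : ℝ | ∃ a b c d e f : ℝ, IsGeneralConfig α₀ a b c d e f ∧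
      p = 2 * (a + b + c + f) + (d + e)} = per t₁ :=
    le_antisymm (csInf_le ⟨per t₁, hlow2⟩ hmem) (le_csInf ⟨per t₁, hmem⟩ hlow2)
  have h8 : sInf {p : ℝ | ∃ a b c d e f : ℝ, IsGeneralConfig α₀ a b c d e f ∧
      p = 2 * (a + b + c + f) + (d + e)} = per t₂ := by
    rw [h7, hP1, hbridge, ← hP2]
  exact ⟨config₁, config₂, hne, hP1, hP2, hbridge, h7, h8⟩
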